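/- arXiv:math/0606726 — 2 statements merged into one kernel-verified Lean document; each statement's English description precedes it below -/
import Mathlib

section
/- Every sylvester congruence class of permutations contains a word w with the separation property w = u v y, where y is a letter, u is empty or consists only of letters greater than y, and v is empty or consists only of letters smaller than y; requiring u and v to recursively satisfy the separation property yields a unique normal form in each class, and the number of such normal forms of length n satisfies the Catalan recurrence f_n = Σ_{i=1}^{n} f_{i-1} f_{n-i} with f_0 = f_1 = 1. -/
open scoped Classical

/-- `d` is a diagonal of the convex `(n+2)`-gon with vertices `0,…,n+1`
(in clockwise increasing order): it joins two nonadjacent vertices. -/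
def IsDiagonal (n : ℕ) (d : ℕ × ℕ) : Prop :=
  d.1 < d.2 ∧ d.2 ≤ n + 1 ∧ d.2 ≠ d.1 + 1 ∧ ¬(d.1 = 0 ∧ d.2 = n + 1)

/-- Two diagonals of a convex polygon cross. -/
def Crosses (d e : ℕ × ℕ) : Prop :=
  (d.1 < e.1 ∧ e.1 < d.2 ∧ d.2 < e.2) ∨ (e.1 < d.1 ∧ d.1 < e.2 ∧ e.2 < d.2)

/-- A triangulation of the convex `(n+2)`-gon: `n-1` pairwise noncrossing diagonals. -/
def IsTriangulation (n : ℕ) (D : Finset (ℕ × ℕ)) : Prop :=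
  (∀ d ∈ D, IsDiagonal n d) ∧ (∀ d ∈ D, ∀ e ∈ D, ¬ Crosses d e) ∧ D.card = n - 1

/-- `{a,b}` (with `a<b`) is an edge of the triangulation `D`: a polygon side or a diagonal. -/
def IsEdge (n : ℕ) (D : Finset (ℕ × ℕ)) (a b : ℕ) : Prop :=
  a < b ∧ b ≤ n + 1 ∧ (b = a + 1 ∨ (a = 0 ∧ b = n + 1) ∨ (a, b) ∈ D)

/-- `{a,b,c}` (with `a<b<c`) is a (triangular) face of the triangulation `D`. -/
def IsFace (n : ℕ) (D : Finset (ℕ × ℕ)) (a b c : ℕ) : Prop :=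
  a < b ∧ b < c ∧ IsEdge n D a b ∧ IsEdge n D b c ∧ IsEdge n D a c

/-- An ear of a triangulation: a vertex incident to no diagonal. -/
def IsEar (n : ℕ) (D : Finset (ℕ × ℕ)) (v : ℕ) : Prop :=
  v ≤ n + 1 ∧ ∀ d ∈ D, d.1 ≠ v ∧ d.2 ≠ v

/-- Degree of a vertex: number of edges (polygon sides and diagonals) incident to it. -/
noncomputable def degreeOf (n : ℕ) (D : Finset (ℕ × ℕ)) (v : ℕ) : ℕ :=
  ((Finset.range (n + 2)).filter (fun w => w ≠ v ∧ IsEdge n D (min v w) (max v w))).card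

/-- The set of faces of a triangulation, as increasing triples. -/
noncomputable def facesSet (n : ℕ) (D : Finset (ℕ × ℕ)) : Finset (ℕ × ℕ × ℕ) :=
  (Finset.range (n + 2) ×ˢ Finset.range (n + 2) ×ˢ Finset.range (n + 2)).filter
    (fun t => IsFace n D t.1 t.2.1 t.2.2)

/-- Predecessor of `v` in the vertex set `Y`. -/
def predIn (Y : Finset ℕ) (v : ℕ) : ℕ := WithBot.unbotD 0 (Y.filter (· < v)).max
/-- Successor of `v` in the vertex set `Y`. -/
def succIn (Y : Finset ℕ) (v : ℕ) : ℕ := WithTop.untopD 0 (Y.filter (v < ·)).min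

/-- The iterative neighbor-joining construction: for each successive letter,
join its two current neighbors by a diagonal and delete the letter's vertex. -/
def phiAux : List ℕ → Finset ℕ → Finset (ℕ × ℕ)
  | [], _ => ∅
  | [_], _ => ∅
  | v :: rest, Y => insert (predIn Y v, succIn Y v) (phiAux rest (Y.erase v))

/-- The map `φ` from permutations (standard words, letters `1,…,n`) to
triangulations of the `(n+2)`-gon with vertices `0,…,n+1`. -/
def phiT (n : ℕ) (l : List ℕ) : Finset (ℕ × ℕ) := phiAux l (Finset.range (n + 2))

/-- `t` is the third vertex of a face of `D` containing the polygon side `{i, i+1}`. -/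
def FaceOnEdge (n : ℕ) (D : Finset (ℕ × ℕ)) (i t : ℕ) : Prop :=
  (t < i ∧ IsFace n D t i (i + 1)) ∨ (i + 1 < t ∧ IsFace n D i (i + 1) t)

/-- `D` and `D'` differ by one diagonal flip, in the quadrilateral `a<b<c<d`. -/
def FlipAdj (n : ℕ) (D D' : Finset (ℕ × ℕ)) : Prop :=
  ∃ a b c d : ℕ, a < b ∧ b < c ∧ c < d ∧
    ((IsFace n D a b d ∧ IsFace n D b c d ∧ D' = insert (a, c) (D.erase (b, d))) ∨
     (IsFace n D a b c ∧ IsFace n D a c d ∧ D' = insert (b, d) (D.erase (a, c))))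

/-- Sylvester adjacency: `u x z u' y u'' ~ u z x u' y u''` with `x ≤ y < z`. -/
def SylvAdj (w1 w2 : List ℕ) : Prop :=
  ∃ (u u' u'' : List ℕ) (x y z : ℕ), x ≤ y ∧ y < z ∧
    w1 = u ++ x :: z :: (u' ++ y :: u'') ∧ w2 = u ++ z :: x :: (u' ++ y :: u'')

/-- Sylvester congruence: the equivalence relation generated by sylvester adjacency. -/
def SylvCong : List ℕ → List ℕ → Prop := Relation.EqvGen SylvAdj

/-- Standardization of a word: replace the occurrences of the smallest letter,
left to right, by `1, 2, …`, then continue with the next letter, etc. -/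
def stdW (w : List ℕ) : List ℕ :=
  (List.range w.length).map (fun i =>
    (((List.range w.length).filter (fun j =>
      w.getD j 0 < w.getD i 0 ∨ (w.getD j 0 = w.getD i 0 ∧ j < i))).length) + 1)

/-- Partial sums of an evaluation `μ`. -/
def Msum (μ : ℕ → ℕ) (s : ℕ) : ℕ := ∑ t ∈ Finset.range s, μ t

/-- The color (block index) of the vertex `i` for the increasing coloring `ε_μ`. -/
noncomputable def colOf (μ : ℕ → ℕ) (p i : ℕ) : ℕ :=
  ((Finset.range p).filter (fun s => Msum μ (s + 1) < i)).card

/-- `D`, colored by the increasing coloring `ε_μ`, is a simple colored triangulation. -/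
def SimpleFor (n p : ℕ) (μ : ℕ → ℕ) (D : Finset (ℕ × ℕ)) : Prop :=
  IsTriangulation n D ∧
  (∀ d ∈ D, 1 ≤ d.1 → d.2 ≤ n → colOf μ p d.1 ≠ colOf μ p d.2) ∧
  (∀ i t, 1 ≤ i → i + 1 ≤ n → colOf μ p i = colOf μ p (i + 1) →
    FaceOnEdge n D i t → t < i)

/-- Switched flip: a diagonal flip (preserving vertex colors) whose two adjacent
faces (with middle vertices `b` and `c`) have different colors. -/
def SwFlipAdj (n p : ℕ) (μ : ℕ → ℕ) (D D' : Finset (ℕ × ℕ)) : Prop :=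
  ∃ a b c d : ℕ, a < b ∧ b < c ∧ c < d ∧ colOf μ p b ≠ colOf μ p c ∧
    ((IsFace n D a b d ∧ IsFace n D b c d ∧ D' = insert (a, c) (D.erase (b, d))) ∨
     (IsFace n D a b c ∧ IsFace n D a c d ∧ D' = insert (b, d) (D.erase (a, c))))
/-- Recursive separation property: `w = u v y` where the letters of `u` are all
greater than `y`, those of `v` are all smaller, and `u`, `v` recursively satisfy
the separation property. -/
inductive SepNF : List ℕ → Prop
  | nil : SepNF []
  | node (u v : List ℕ) (y : ℕ) :
      SepNF u → SepNF v → (∀ a ∈ u, y < a) → (∀ a ∈ v, a < y) →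
      SepNF (u ++ v ++ [y])

/-- The number of normal forms (words with the recursive separation property)
among the permutations of `S_k`. -/
noncomputable def sepCount (k : ℕ) : ℕ :=
  Nat.card {l : List ℕ // l.Perm ((List.range k).map (· + 1)) ∧ SepNF l}

/-!
Sorting the prefix `m` of a word `m ++ [y]` into its letters greater than `y` followed by its
letters smaller than `y` takes only sylvester moves, since each smaller letter hops over the
greater ones with `y` as witness; recursing on the two blocks gives a normal form in every class.
The binary search tree obtained by inserting the letters from right to left is a sylvester
invariant, because an adjacency only swaps the insertions of two letters separated by a letter
already in the tree; a normal form is the reversed preorder of its tree, hence unique in its class.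
A normal form of `[s, s + m]` ending in `s + i` splits uniquely into normal forms of
`(s + i, s + m]` and `[s, s + i)`, and the number of normal forms of an interval depends only on
its length: this is the Catalan recurrence.
-/

namespace SylvAdj

theorem perm {w₁ w₂ : List ℕ} (h : SylvAdj w₁ w₂) : w₁.Perm w₂ := by
  obtain ⟨u, u', u'', x, y, z, -, -, rfl, rfl⟩ := h
  exact .append_left u (.swap z x _)

theorem append_left (p : List ℕ) {w₁ w₂ : List ℕ} (h : SylvAdj w₁ w₂) :
    SylvAdj (p ++ w₁) (p ++ w₂) := by
  obtain ⟨u, u', u'', x, y, z, hxy, hyz, rfl, rfl⟩ := h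
  exact ⟨p ++ u, u', u'', x, y, z, hxy, hyz, by simp, by simp⟩

theorem append_right (s : List ℕ) {w₁ w₂ : List ℕ} (h : SylvAdj w₁ w₂) :
    SylvAdj (w₁ ++ s) (w₂ ++ s) := by
  obtain ⟨u, u', u'', x, y, z, hxy, hyz, rfl, rfl⟩ := h
  exact ⟨u, u', u'' ++ s, x, y, z, hxy, hyz, by simp, by simp⟩

end SylvAdj

namespace SylvCong

theorem refl (w : List ℕ) : SylvCong w w := Relation.EqvGen.refl w

theorem trans {w₁ w₂ w₃ : List ℕ} (h₁₂ : SylvCong w₁ w₂) (h₂₃ : SylvCong w₂ w₃) :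
    SylvCong w₁ w₃ :=
  Relation.EqvGen.trans _ _ _ h₁₂ h₂₃

theorem perm {w₁ w₂ : List ℕ} (h : SylvCong w₁ w₂) : w₁.Perm w₂ :=
  haveI := (List.Perm.eqv ℕ).isEquiv
  Relation.EqvGen.eqvGen_le (r := SylvAdj) (fun _ _ => SylvAdj.perm) _ _ h

theorem append_left (p : List ℕ) {w₁ w₂ : List ℕ} (h : SylvCong w₁ w₂) :
    SylvCong (p ++ w₁) (p ++ w₂) :=
  Quot.eqvGen_exact <|
    congrArg (Quot.map (p ++ ·) fun _ _ => SylvAdj.append_left p) (Quot.eqvGen_sound h)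

theorem append_right (s : List ℕ) {w₁ w₂ : List ℕ} (h : SylvCong w₁ w₂) :
    SylvCong (w₁ ++ s) (w₂ ++ s) :=
  Quot.eqvGen_exact <|
    congrArg (Quot.map (· ++ s) fun _ _ => SylvAdj.append_right s) (Quot.eqvGen_sound h)

/-- A letter `x < y` moves right past letters `> y`, each of which witnesses a sylvester
adjacency together with the occurrence of `y` further right. -/
theorem cons_append_of_lt {x y : ℕ} (hxy : x < y) {g r : List ℕ} (hg : ∀ z ∈ g, y < z)
    (hy : y ∈ r) : SylvCong (x :: (g ++ r)) (g ++ x :: r) := by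
  induction g with
  | nil => exact refl _
  | cons z g ih =>
    obtain ⟨r₁, r₂, rfl⟩ := List.append_of_mem hy
    have swap : SylvAdj (x :: z :: (g ++ (r₁ ++ y :: r₂))) (z :: x :: (g ++ (r₁ ++ y :: r₂))) :=
      ⟨[], g ++ r₁, r₂, x, y, z, hxy.le, hg z (by simp), by simp, by simp⟩
    exact trans (.rel _ _ swap) ((ih fun z' hz' => hg z' (by simp [hz'])).append_left [z])

theorem append_singleton_filter {y : ℕ} :
    ∀ {m : List ℕ}, y ∉ m → SylvCong (m ++ [y]) (m.filter (y < ·) ++ m.filter (· < y) ++ [y])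
  | [], _ => refl _
  | a :: m, hy => by
    rw [List.mem_cons, not_or] at hy
    have ih := (append_singleton_filter hy.2).append_left [a]
    rcases Nat.lt_or_gt_of_ne hy.1 with hya | hay
    · have hay : ¬ a < y := by omega
      simpa [List.filter_cons, hya, hay] using ih
    · have hya : ¬ y < a := by omega
      simp only [List.filter_cons, hya, hay, decide_true, decide_false]
      refine (by simpa using ih : SylvCong _ _).trans ?_
      simpa using cons_append_of_lt hay (r := m.filter (· < y) ++ [y])
        (fun z hz => by simpa using (List.mem_filter.mp hz).2) (by simp)

end SylvCong

theorem exists_sylvCong_sepNF {l : List ℕ} (hl : l.Nodup) : ∃ w, SylvCong l w ∧ SepNF w := by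
  induction h : l.length using Nat.strong_induction_on generalizing l with
  | _ n ih =>
  rcases l.eq_nil_or_concat with rfl | ⟨m, y, rfl⟩
  · exact ⟨[], .refl _, .nil⟩
  rw [List.concat_eq_append] at hl ⊢
  rw [List.nodup_append] at hl
  have hym : y ∉ m := fun hy => hl.2.2 y hy y (List.mem_singleton_self y) rfl
  have hlen : ∀ p : ℕ → Bool, (m.filter p).length < n := fun p => by
    have := List.length_filter_le p m
    rw [List.length_concat] at h
    omega
  obtain ⟨u, hu, hu_nf⟩ := ih _ (hlen _) (hl.1.filter (y < ·)) rfl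
  obtain ⟨v, hv, hv_nf⟩ := ih _ (hlen _) (hl.1.filter (· < y)) rfl
  refine ⟨u ++ v ++ [y], ?_, .node u v y hu_nf hv_nf ?_ ?_⟩
  · exact (SylvCong.append_singleton_filter hym).trans
      (((hu.append_right _).trans (hv.append_left u)).append_right [y])
  · intro a ha
    simpa using (List.mem_filter.mp (hu.perm.mem_iff.mpr ha)).2
  · intro a ha
    simpa using (List.mem_filter.mp (hv.perm.mem_iff.mpr ha)).2

namespace BinaryTree

variable {α : Type*} [LinearOrder α]

def preorder : BinaryTree α → List α
  | nil => []
  | node a l r => a :: (l.preorder ++ r.preorder)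

def IsBST : BinaryTree α → Prop
  | nil => True
  | node a l r => (∀ x ∈ l.preorder, x < a) ∧ (∀ x ∈ r.preorder, a < x) ∧ l.IsBST ∧ r.IsBST

def bstInsert (x : α) : BinaryTree α → BinaryTree α
  | nil => node x nil nil
  | node a l r => if x < a then node a (bstInsert x l) r else node a l (bstInsert x r)

def bstOfList (w : List α) : BinaryTree α := w.foldr bstInsert nil

@[simp]
theorem mem_preorder_bstInsert {x z : α} {t : BinaryTree α} :
    z ∈ (bstInsert x t).preorder ↔ z = x ∨ z ∈ t.preorder := by
  induction t with
  | nil => simp [bstInsert, preorder]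
  | node a l r ihl ihr =>
    unfold bstInsert
    split_ifs <;> simp only [preorder, List.mem_cons, List.mem_append, ihl, ihr] <;> tauto

theorem isBST_bstInsert {x : α} {t : BinaryTree α} (ht : t.IsBST) (hx : x ∉ t.preorder) :
    (bstInsert x t).IsBST := by
  induction t with
  | nil => simp [bstInsert, IsBST, preorder]
  | node a l r ihl ihr =>
    obtain ⟨hl, hr, hl_bst, hr_bst⟩ := ht
    simp only [preorder, List.mem_cons, List.mem_append, not_or] at hx
    unfold bstInsert
    split_ifs with hxa
    · refine ⟨?_, hr, ihl hl_bst hx.2.1, hr_bst⟩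
      simp only [mem_preorder_bstInsert]
      rintro z (rfl | hz)
      exacts [hxa, hl z hz]
    · refine ⟨hl, ?_, hl_bst, ihr hr_bst hx.2.2⟩
      simp only [mem_preorder_bstInsert]
      rintro z (rfl | hz)
      exacts [lt_of_le_of_ne (not_lt.mp hxa) (Ne.symm hx.1), hr z hz]

@[simp]
theorem mem_preorder_bstOfList {z : α} {w : List α} : z ∈ (bstOfList w).preorder ↔ z ∈ w := by
  induction w with
  | nil => simp [bstOfList, preorder]
  | cons a w ih => simp [bstOfList, ← ih]

theorem isBST_bstOfList {w : List α} (hw : w.Nodup) : (bstOfList w).IsBST := by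
  induction w with
  | nil => trivial
  | cons a w ih =>
    rw [List.nodup_cons] at hw
    exact isBST_bstInsert (ih hw.2) (mt mem_preorder_bstOfList.mp hw.1)

/-- Insertions of `x < z` commute once a letter strictly between them sits in the tree: the
two insertion paths separate at that letter at the latest. -/
theorem IsBST.bstInsert_comm {x y z : α} {t : BinaryTree α} (ht : t.IsBST)
    (hy : y ∈ t.preorder) (hxy : x < y) (hyz : y < z) :
    bstInsert x (bstInsert z t) = bstInsert z (bstInsert x t) := by
  induction t with
  | nil => simp [preorder] at hy
  | node a l r ihl ihr =>
    obtain ⟨hl, hr, hl_bst, hr_bst⟩ := ht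
    simp only [preorder, List.mem_cons, List.mem_append] at hy
    by_cases hxa : x < a <;> by_cases hza : z < a
    · have hyl : y ∈ l.preorder := by
        rcases hy with rfl | hy | hy
        · exact absurd hza (not_lt.mpr hyz.le)
        · exact hy
        · exact absurd (hr y hy) (not_lt.mpr (hyz.trans hza).le)
      simp [bstInsert, hxa, hza, ihl hl_bst hyl]
    · simp [bstInsert, hxa, hza]
    · exact absurd (hxy.trans (hyz.trans hza)) hxa
    · have hyr : y ∈ r.preorder := by
        rcases hy with rfl | hy | hy
        · exact absurd hxy hxa
        · exact absurd (hl y hy) (not_lt.mpr (not_lt.mp hxa |>.trans hxy.le))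
        · exact hy
      simp [bstInsert, hxa, hza, ihr hr_bst hyr]

theorem foldr_bstInsert_node_of_forall_lt {w : List α} {a : α} {l r : BinaryTree α}
    (hw : ∀ x ∈ w, x < a) : w.foldr bstInsert (node a l r) = node a (w.foldr bstInsert l) r := by
  induction w with
  | nil => rfl
  | cons x w ih =>
    simp only [List.forall_mem_cons] at hw
    simp [ih hw.2, bstInsert, hw.1]

theorem foldr_bstInsert_node_of_forall_gt {w : List α} {a : α} {l r : BinaryTree α}
    (hw : ∀ x ∈ w, a < x) : w.foldr bstInsert (node a l r) = node a l (w.foldr bstInsert r) := by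
  induction w with
  | nil => rfl
  | cons x w ih =>
    simp only [List.forall_mem_cons] at hw
    simp [ih hw.2, bstInsert, not_lt.mpr hw.1.le]

theorem bstOfList_append_append_singleton {u v : List α} {y : α} (hu : ∀ a ∈ u, y < a)
    (hv : ∀ a ∈ v, a < y) : bstOfList (u ++ v ++ [y]) = node y (bstOfList v) (bstOfList u) := by
  simp only [bstOfList, List.foldr_append, List.foldr_cons, List.foldr_nil, bstInsert,
    foldr_bstInsert_node_of_forall_lt hv, foldr_bstInsert_node_of_forall_gt hu]

end BinaryTree

open BinaryTree

theorem SylvAdj.bstOfList_eq {w₁ w₂ : List ℕ} (h : SylvAdj w₁ w₂) (hw : w₁.Nodup) :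
    bstOfList w₁ = bstOfList w₂ := by
  obtain ⟨u, u', u'', x, y, z, hxy, hyz, rfl, rfl⟩ := h
  have hw' : (x :: z :: (u' ++ y :: u'')).Nodup := (List.nodup_append.mp hw).2.1
  have hxy : x < y := lt_of_le_of_ne hxy fun h => by simp [h] at hw'
  have hcomm := (isBST_bstOfList hw'.of_cons.of_cons).bstInsert_comm
    (mem_preorder_bstOfList.mpr (by simp)) hxy hyz
  simp only [bstOfList, List.foldr_append, List.foldr_cons] at hcomm ⊢
  rw [hcomm]

theorem SylvCong.bstOfList_eq {w₁ w₂ : List ℕ} (h : SylvCong w₁ w₂) (hw : w₁.Nodup) :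
    bstOfList w₁ = bstOfList w₂ := by
  induction h with
  | rel _ _ h => exact h.bstOfList_eq hw
  | refl => rfl
  | symm _ _ h ih => exact (ih ((SylvCong.perm h).nodup_iff.mpr hw)).symm
  | trans _ _ _ h _ ih₁ ih₂ => exact (ih₁ hw).trans (ih₂ ((SylvCong.perm h).nodup_iff.mp hw))

theorem SepNF.preorder_bstOfList {w : List ℕ} (h : SepNF w) :
    (bstOfList w).preorder.reverse = w := by
  induction h with
  | nil => rfl
  | node u v y _ _ hu hv ihu ihv =>
    rw [bstOfList_append_append_singleton hu hv]
    simp [preorder, ihu, ihv]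

theorem SepNF.eq_of_sylvCong {w₁ w₂ : List ℕ} (h₁ : SepNF w₁) (h₂ : SepNF w₂) (hw : w₁.Nodup)
    (h : SylvCong w₁ w₂) : w₁ = w₂ := by
  rw [← h₁.preorder_bstOfList, ← h₂.preorder_bstOfList, h.bstOfList_eq hw]

theorem List.range'_succ_eq_append_cons {s m i : ℕ} (hi : i ≤ m) :
    List.range' s (m + 1) = List.range' s i ++ (s + i) :: List.range' (s + i + 1) (m - i) := by
  rw [← List.range'_succ, List.range'_append_1]
  congr 1
  omega

theorem List.Perm.perm_and_perm_of_separated {α : Type*} [LinearOrder α] {u v a b : List α}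
    {y : α} (h : (u ++ v ++ [y]).Perm (a ++ y :: b)) (hu : ∀ x ∈ u, y < x) (hv : ∀ x ∈ v, x < y)
    (ha : ∀ x ∈ a, x < y) (hb : ∀ x ∈ b, y < x) : u.Perm b ∧ v.Perm a := by
  have key : ∀ {p q : List α}, (∀ x ∈ p, y < x) → (∀ x ∈ q, x < y) →
      (p ++ q ++ [y]).filter (y < ·) = p ∧ (p ++ q ++ [y]).filter (· < y) = q := by
    intro p q hp hq
    have hp₁ : p.filter (y < ·) = p := List.filter_eq_self.mpr (by simpa using hp)
    have hp₂ : p.filter (· < y) = [] :=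
      List.filter_eq_nil_iff.mpr fun x hx => by simpa using (hp x hx).le
    have hq₁ : q.filter (y < ·) = [] :=
      List.filter_eq_nil_iff.mpr fun x hx => by simpa using (hq x hx).le
    have hq₂ : q.filter (· < y) = q := List.filter_eq_self.mpr (by simpa using hq)
    simp [List.filter_append, hp₁, hp₂, hq₁, hq₂]
  have hab : (a ++ y :: b).Perm (b ++ a ++ [y]) := by
    simpa using List.perm_append_comm (l₁ := a ++ [y]) (l₂ := b)
  obtain ⟨h₁, h₂⟩ := key hu hv
  obtain ⟨h₃, h₄⟩ := key hb ha
  constructor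
  · simpa only [h₁, h₃] using (h.trans hab).filter (y < ·)
  · simpa only [h₂, h₄] using (h.trans hab).filter (· < y)

def sepNFs (s k : ℕ) : Set (List ℕ) := {l | l.Perm (List.range' s k) ∧ SepNF l}

instance (s k : ℕ) : Finite (sepNFs s k) :=
  Set.Finite.to_subtype <| (List.range' s k).permutations.toFinset.finite_toSet.subset
    fun l hl => by simpa [List.mem_permutations] using hl.1

theorem sepCount_eq_card_sepNFs (k : ℕ) : sepCount k = Nat.card (sepNFs 1 k) := by
  have : (List.range k).map (· + 1) = List.range' 1 k := by
    simp [List.range'_eq_map_range, add_comm]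
  rw [sepCount, this]
  rfl

theorem card_sepNFs_zero (s : ℕ) : Nat.card (sepNFs s 0) = 1 := by
  have : sepNFs s 0 = {[]} := by
    ext l
    simp only [sepNFs, List.range'_zero, List.perm_nil, Set.mem_ofPred_eq, Set.mem_singleton_iff,
      and_iff_left_iff_imp]
    rintro rfl
    exact .nil
  rw [this, Nat.card_unique]

theorem append_append_singleton_mem_sepNFs {s m i : ℕ} (hi : i ≤ m) {u v : List ℕ}
    (hu : u ∈ sepNFs (s + i + 1) (m - i)) (hv : v ∈ sepNFs s i) :
    u ++ v ++ [s + i] ∈ sepNFs s (m + 1) := by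
  refine ⟨?_, .node u v _ hu.2 hv.2 ?_ ?_⟩
  · have := List.perm_append_comm.trans ((hv.1.append_right [s + i]).append hu.1)
    simpa [List.range'_succ_eq_append_cons hi] using this
  · intro a ha
    have := List.mem_range'_1.mp (hu.1.mem_iff.mp ha)
    omega
  · intro a ha
    have := List.mem_range'_1.mp (hv.1.mem_iff.mp ha)
    omega

theorem exists_eq_append_append_singleton_of_mem_sepNFs {s m : ℕ} {l : List ℕ}
    (hl : l ∈ sepNFs s (m + 1)) : ∃ i ≤ m, ∃ u ∈ sepNFs (s + i + 1) (m - i), ∃ v ∈ sepNFs s i,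
      l = u ++ v ++ [s + i] := by
  obtain ⟨hperm, hnf⟩ := hl
  cases hnf with
  | nil => simpa using hperm.length_eq
  | node u v y hu_nf hv_nf hu hv =>
    obtain ⟨hsy, hym⟩ := List.mem_range'_1.mp (hperm.mem_iff.mp (by simp : y ∈ u ++ v ++ [y]))
    obtain ⟨i, rfl⟩ := Nat.exists_eq_add_of_le hsy
    rw [List.range'_succ_eq_append_cons (by omega : i ≤ m)] at hperm
    obtain ⟨hu_perm, hv_perm⟩ := hperm.perm_and_perm_of_separated hu hv
      (fun x hx => by have := List.mem_range'_1.mp hx; omega)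
      (fun x hx => by have := List.mem_range'_1.mp hx; omega)
    exact ⟨i, by omega, u, ⟨hu_perm, hu_nf⟩, v, ⟨hv_perm, hv_nf⟩, rfl⟩

/-- The normal forms of `[s, s + m]` ending in `s + i` are the words `u ++ v ++ [s + i]` with `u`
a normal form of `(s + i, s + m]` and `v` one of `[s, s + i)`. -/
theorem card_sepNFs_succ (s m : ℕ) :
    Nat.card (sepNFs s (m + 1)) = ∑ i ∈ Finset.range (m + 1),
      Nat.card (sepNFs (s + i + 1) (m - i)) * Nat.card (sepNFs s i) := by
  let join : (Σ i : Fin (m + 1), sepNFs (s + i + 1) (m - i) × sepNFs s i) → sepNFs s (m + 1) :=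
    fun ⟨i, u, v⟩ => ⟨u ++ v ++ [s + i],
      append_append_singleton_mem_sepNFs (Nat.lt_succ_iff.mp i.2) u.2 v.2⟩
  have hjoin : join.Bijective := by
    constructor
    · rintro ⟨i, ⟨u, hu⟩, ⟨v, hv⟩⟩ ⟨i', ⟨u', hu'⟩, ⟨v', hv'⟩⟩ h
      have h' : u ++ v ++ [s + i] = u' ++ v' ++ [s + i'] := congrArg Subtype.val h
      obtain ⟨huv, hi⟩ := List.append_inj' h' rfl
      obtain rfl : i = i' := Fin.ext (by simpa using hi)
      obtain ⟨rfl, rfl⟩ := List.append_inj huv (by rw [hu.1.length_eq, hu'.1.length_eq])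
      rfl
    · rintro ⟨l, hl⟩
      obtain ⟨i, hi, u, hu, v, hv, rfl⟩ := exists_eq_append_append_singleton_of_mem_sepNFs hl
      exact ⟨⟨⟨i, Nat.lt_succ_of_le hi⟩, ⟨u, hu⟩, ⟨v, hv⟩⟩, rfl⟩
  rw [← Nat.card_eq_of_bijective join hjoin, Nat.card_sigma,
    ← Fin.sum_univ_eq_sum_range
      (fun i => Nat.card (sepNFs (s + i + 1) (m - i)) * Nat.card (sepNFs s i))]
  simp only [Nat.card_prod]

theorem card_sepNFs_eq (s t k : ℕ) : Nat.card (sepNFs s k) = Nat.card (sepNFs t k) := by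
  induction k using Nat.strong_induction_on generalizing s t with
  | _ k ih =>
  rcases k with _ | m
  · rw [card_sepNFs_zero, card_sepNFs_zero]
  rw [card_sepNFs_succ, card_sepNFs_succ]
  refine Finset.sum_congr rfl fun i hi => ?_
  have hi := Finset.mem_range.mp hi
  rw [ih (m - i) (by omega) _ (t + i + 1), ih i (by omega) s t]

theorem sepCount_zero : sepCount 0 = 1 := by
  rw [sepCount_eq_card_sepNFs, card_sepNFs_zero]

theorem sepCount_succ (m : ℕ) :
    sepCount (m + 1) = ∑ i ∈ Finset.range (m + 1), sepCount i * sepCount (m - i) := by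
  rw [sepCount_eq_card_sepNFs, card_sepNFs_succ]
  refine Finset.sum_congr rfl fun i _ => ?_
  rw [card_sepNFs_eq _ 1, mul_comm, sepCount_eq_card_sepNFs, sepCount_eq_card_sepNFs]

/-- Every sylvester class contains a word with the separation property; the
recursive normal form is unique in each class; and the number of normal forms
satisfies the Catalan recurrence `f_n = Σ_{i=1}^{n} f_{i-1} f_{n-i}`,
`f_0 = f_1 = 1`. -/
theorem stmt14 (n : ℕ) :
    (∀ l : List ℕ, l.Perm ((List.range n).map (· + 1)) →
      ∃ w : List ℕ, SylvCong l w ∧ SepNF w) ∧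
    (∀ w1 w2 : List ℕ, w1.Perm ((List.range n).map (· + 1)) →
      w2.Perm ((List.range n).map (· + 1)) →
      SepNF w1 → SepNF w2 → SylvCong w1 w2 → w1 = w2) ∧
    sepCount 0 = 1 ∧ sepCount 1 = 1 ∧
    (∀ m : ℕ, 1 ≤ m →
      sepCount m = ∑ i ∈ Finset.range m, sepCount i * sepCount (m - 1 - i)) := by
  have hnodup : ∀ {l : List ℕ}, l.Perm ((List.range n).map (· + 1)) → l.Nodup := fun hl =>
    hl.nodup_iff.mpr (List.nodup_range.map fun _ _ => Nat.succ.inj)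
  refine ⟨fun l hl => exists_sylvCong_sepNF (hnodup hl),
    fun w₁ w₂ h₁ _ hnf₁ hnf₂ h => hnf₁.eq_of_sylvCong hnf₂ (hnodup h₁) h, sepCount_zero,
    by simp [sepCount_succ 0, sepCount_zero], fun m hm => ?_⟩
  obtain ⟨m, rfl⟩ := Nat.exists_eq_add_of_le' hm
  simpa using sepCount_succ m
end

section
/- If a sequence of signed flips transforms a signed triangulation T_ε into signed triangulations U_{ε'} and U_{ε''} having the same underlying triangulation U, then ε' = ε''. Equivalently: if the doubled signed sphere triangulation U_{ε'} ∪_P U_{-ε''} (two copies of U glued along the polygon boundary, with signings ε' and -ε'') satisfies the Heawood property that the sum of the signs of the faces around each vertex is ≡ 0 mod 3, then ε' = ε''. -/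
open scoped Classical

/-! Choose a face `abc` (`a < b < c`) on which `ε'` and `ε''` disagree with `c - a` minimal.
Every other face at the middle vertex `b` lies inside the angle `abc` and is narrower, so the
two signings agree on it; the Heawood sum at `b` is then `ε'(abc) - ε''(abc) = ±2`, which is
not divisible by 3. -/

theorem isFace_of_mem_facesSet {n : ℕ} {D : Finset (ℕ × ℕ)} {F : ℕ × ℕ × ℕ}
    (hF : F ∈ facesSet n D) : IsFace n D F.1 F.2.1 F.2.2 :=
  (Finset.mem_filter.mp hF).2

section Noncrossing

variable {n : ℕ} {D : Finset (ℕ × ℕ)} (hnc : ∀ d ∈ D, ∀ e ∈ D, ¬ Crosses d e)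
include hnc

/-- Polygon sides cannot interleave with anything, so the statement reduces to `hnc`. -/
theorem IsEdge.not_interleave {p q r s : ℕ} (hpq : IsEdge n D p q) (hrs : IsEdge n D r s)
    (hpr : p < r) (hrq : r < q) (hqs : q < s) : False := by
  obtain ⟨-, hqn, hq⟩ := hpq
  obtain ⟨-, hsn, hs⟩ := hrs
  have hqD : (p, q) ∈ D := (hq.resolve_left (by omega)).resolve_left (by omega)
  have hsD : (r, s) ∈ D := (hs.resolve_left (by omega)).resolve_left (by omega)
  exact hnc _ hqD _ hsD (Or.inl ⟨hpr, hrq, hqs⟩)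

/-- The faces around the middle vertex `b` of a face `abc` form a fan inside the
angle `a b c`, so `abc` is strictly the widest of them. -/
theorem IsFace.width_lt_of_mem_of_ne {a b c x y z : ℕ} (hF : IsFace n D a b c)
    (hG : IsFace n D x y z) (hb : x = b ∨ y = b ∨ z = b) (hne : (x, y, z) ≠ (a, b, c)) :
    z - x < c - a := by
  obtain ⟨hab, hbc, -, -, hEac⟩ := hF
  obtain ⟨hxy, hyz, hExy, hEyz, hExz⟩ := hG
  have hne' : ¬(x = a ∧ y = b ∧ z = c) := by simpa [Prod.ext_iff] using hne
  rcases hb with rfl | rfl | rfl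
  · have : z ≤ c := by
      by_contra
      exact hEac.not_interleave hnc hExz hab hbc (by omega)
    omega
  · have : a ≤ x := by
      by_contra
      exact hExy.not_interleave hnc hEac (by omega) hab hbc
    have : z ≤ c := by
      by_contra
      exact hEac.not_interleave hnc hEyz hab hbc (by omega)
    omega
  · have : a ≤ x := by
      by_contra
      exact hExz.not_interleave hnc hEac (by omega) hab hbc
    omega

theorem exists_isFace_forall_eq_at_middle (ε' ε'' : ℕ × ℕ × ℕ → ℤ)
    (h : ∃ F ∈ facesSet n D, ε' F ≠ ε'' F) :
    ∃ a b c, (a, b, c) ∈ facesSet n D ∧ ε' (a, b, c) ≠ ε'' (a, b, c) ∧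
      ∀ G ∈ facesSet n D, (G.1 = b ∨ G.2.1 = b ∨ G.2.2 = b) → G ≠ (a, b, c) →
        ε' G = ε'' G := by
  obtain ⟨F0, hF0, hF0ne⟩ := h
  obtain ⟨⟨a, b, c⟩, hF, hmin⟩ := Finset.exists_min_image
    ((facesSet n D).filter (fun F => ε' F ≠ ε'' F)) (fun F => F.2.2 - F.1)
    ⟨F0, Finset.mem_filter.mpr ⟨hF0, hF0ne⟩⟩
  obtain ⟨hFmem, hFne⟩ := Finset.mem_filter.mp hF
  refine ⟨a, b, c, hFmem, hFne, fun G hG hGb hGne => ?_⟩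
  by_contra hGne'
  have hle := hmin G (Finset.mem_filter.mpr ⟨hG, hGne'⟩)
  have hlt := (isFace_of_mem_facesSet hFmem).width_lt_of_mem_of_ne hnc
    (isFace_of_mem_facesSet hG) hGb hGne
  exact hle.not_gt hlt

end Noncrossing

/-- If the doubled signed sphere triangulation `U_{ε'} ∪_P U_{-ε''}` (two copies of
`U` glued along the polygon boundary, signed by `ε'` and `-ε''`) satisfies the
Heawood property — at each vertex the sum of the signs of the incident faces is
divisible by 3 — then `ε' = ε''`. -/
theorem stmt18 (n : ℕ) (D : Finset (ℕ × ℕ)) (hD : IsTriangulation n D)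
    (ε' ε'' : ℕ × ℕ × ℕ → ℤ)
    (hs1 : ∀ F ∈ facesSet n D, ε' F = 1 ∨ ε' F = -1)
    (hs2 : ∀ F ∈ facesSet n D, ε'' F = 1 ∨ ε'' F = -1)
    (heawood : ∀ v ≤ n + 1,
      (3 : ℤ) ∣ ∑ F ∈ (facesSet n D).filter
        (fun t => t.1 = v ∨ t.2.1 = v ∨ t.2.2 = v), (ε' F + (- ε'' F))) :
    ∀ F ∈ facesSet n D, ε' F = ε'' F := by
  by_contra! h
  obtain ⟨a, b, c, hF, hne, hrest⟩ := exists_isFace_forall_eq_at_middle hD.2.1 ε' ε'' h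
  obtain ⟨-, hbc, -, ⟨-, hc, -⟩, -⟩ : IsFace n D a b c := isFace_of_mem_facesSet hF
  have hsum : ∑ G ∈ (facesSet n D).filter (fun t => t.1 = b ∨ t.2.1 = b ∨ t.2.2 = b),
      (ε' G + -ε'' G) = ε' (a, b, c) + -ε'' (a, b, c) := by
    refine Finset.sum_eq_single (a, b, c) (fun G hG hGne => ?_) (fun hF_not => ?_)
    · obtain ⟨hGmem, hGb⟩ := Finset.mem_filter.mp hG
      rw [hrest G hGmem hGb hGne, add_neg_cancel]
    · exact absurd (Finset.mem_filter.mpr ⟨hF, Or.inr (Or.inl rfl)⟩) hF_not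
  have hdvd := hsum ▸ heawood b (by omega)
  rcases hs1 _ hF with h1 | h1 <;> rcases hs2 _ hF with h2 | h2 <;>
    rw [h1, h2] at hdvd hne <;> omega
end
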